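/- arXiv:1701.07914 — 2 statements merged into one kernel-verified Lean document; each statement's English description precedes it below -/
import Mathlib

section
/- Let (A,V) be a ρ-secure AMD coding scheme and (E,D) a coding scheme with the linearity property. Define Enc(s) = E(A(s)) and Dec(c) = ⊥ if D(c) = ⊥, else V(D(c)). Then for any fixed error Δ with D(Δ) ≠ ⊥ and D(Δ) ≠ 0, and any message s, Pr[Dec(Enc(s) + Δ) ≠ ⊥] ≤ ρ. -/
/- The AMD code is applied to the decoded word: by linearity and correctness of `(E, D)`, every
encoding `c` of `a` has `D (c + Δ) = a + D Δ`, so `Dec (c + Δ) ≠ ⊥` forces `V (a + D Δ) ≠ ⊥`, an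
event of probability at most `ρ` since `D Δ ≠ 0`. -/

open scoped ENNReal

noncomputable def prob {α : Type*} (X : PMF α) (P : α → Prop) : ℝ≥0∞ :=
  X.toOuterMeasure {x | P x}

def LECSSLinear {n k : ℕ} (D : (Fin n → ZMod 2) → Option (Fin k → ZMod 2)) : Prop :=
  ∀ c Δ : Fin n → ZMod 2, D c ≠ none →
    ((D Δ = none → D (c + Δ) = none) ∧
     (∀ mc mΔ : Fin k → ZMod 2, D c = some mc → D Δ = some mΔ →
        D (c + Δ) = some (mc + mΔ)))

theorem prob_bind_le_of_support {α β : Type*} (X : PMF α) (f : α → PMF β) (P : β → Prop)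
    (Q : α → Prop) (h : ∀ a ∈ X.support, ∀ b ∈ (f a).support, P b → Q a) :
    prob (X.bind f) P ≤ prob X Q := by
  rw [prob, prob, PMF.toOuterMeasure_bind_apply, PMF.toOuterMeasure_apply]
  refine ENNReal.tsum_le_tsum fun a => ?_
  by_cases hQ : Q a
  · rw [Set.indicator_of_mem (show a ∈ {a | Q a} from hQ)]
    refine mul_le_of_le_one_right' ((MeasureTheory.measure_mono (Set.subset_univ _)).trans ?_)
    exact ((f a).toOuterMeasure_apply_eq_one_iff _).2 (Set.subset_univ _) |>.le
  · rw [Set.indicator_of_notMem (show a ∉ {a | Q a} from hQ)]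
    by_cases ha : a ∈ X.support
    · have hzero : (f a).toOuterMeasure {b | P b} = 0 :=
        (PMF.toOuterMeasure_apply_eq_zero_iff _ _).2 <|
          Set.disjoint_left.2 fun b hb hP => hQ (h a ha b hb hP)
      rw [hzero, mul_zero]
    · rw [(PMF.apply_eq_zero_iff X a).2 ha, zero_mul]

theorem LECSSLinear.decode_add {n k : ℕ} {D : (Fin n → ZMod 2) → Option (Fin k → ZMod 2)}
    (hlin : LECSSLinear D) {c Δ : Fin n → ZMod 2} {mc mΔ : Fin k → ZMod 2}
    (hc : D c = some mc) (hΔ : D Δ = some mΔ) : D (c + Δ) = some (mc + mΔ) :=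
  (hlin c Δ (by simp [hc])).2 mc mΔ hc hΔ

/-- let `(A,V)` be a `ρ`-secure AMD code and `(E,D)` a coding scheme
with the linearity property.  Define `Enc s = E (A s)` and
`Dec c = ⊥ if D c = ⊥ else V (D c)`.  Then for any fixed error `Δ` with
`D Δ ≠ ⊥` and `D Δ ≠ 0`, and any message `s`, `Pr[Dec (Enc s + Δ) ≠ ⊥] ≤ ρ`. -/
theorem amd_lecss_detects_decodable_error (k k' n : ℕ) (ρ : ℝ≥0∞)
    (A : (Fin k → ZMod 2) → PMF (Fin k' → ZMod 2))
    (V : (Fin k' → ZMod 2) → Option (Fin k → ZMod 2))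
    (hAMD : ∀ m : Fin k → ZMod 2, ∀ Δ' : Fin k' → ZMod 2, Δ' ≠ 0 →
      prob (A m) (fun a => V (a + Δ') ≠ none) ≤ ρ)
    (E : (Fin k' → ZMod 2) → PMF (Fin n → ZMod 2))
    (D : (Fin n → ZMod 2) → Option (Fin k' → ZMod 2))
    (hEcorrect : ∀ a c, c ∈ (E a).support → D c = some a)
    (hlin : LECSSLinear D)
    (Δ : Fin n → ZMod 2) (mΔ : Fin k' → ZMod 2)
    (hΔ : D Δ = some mΔ) (hΔ0 : mΔ ≠ 0)
    (s : Fin k → ZMod 2) :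
    prob ((A s).bind E) (fun c => (D (c + Δ)).bind V ≠ none) ≤ ρ := by
  refine le_trans ?_ (hAMD s mΔ hΔ0)
  refine prob_bind_le_of_support _ _ _ _ fun a _ c hc hdec => ?_
  rwa [hlin.decode_add (hEcorrect a c hc) hΔ, Option.bind_some] at hdec
end

section
/- Let n, t, d, p, r be natural numbers with t even, t > 6, r ≤ t < n/2, d > 3n/8, and t - r < p ≤ (n - r)/2. Let Δ be a random vector in {0,1}^n whose coordinates in a set of size p + r are t-wise independent uniform bits and whose remaining coordinates are fixed, and let δ* agree with Δ on the fixed coordinates. Then Pr[d_H(Δ, δ*) ≥ d] ≤ (t / (n (d/n - 3/8)^2))^{t/2}. -/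
/-!
Write the number of coordinates of `T` (with `#T = m = p + r`) on which `Δ` disagrees with `δ*`
as `(m + Z)/2`, where `Z = ∑ εᵢ` is a sum of `±1` signs.  Expanding `E[Z^t]`, `t`-wise
independence makes each term `E[ε_{g 1} ⋯ ε_{g t}]` equal to `1` when every coordinate occurs an
even number of times in `g` and `0` otherwise; such `g` take at most `t/2` values, so there are at
most `C(m, t/2) (t/2)^t ≤ (e m t/2)^{t/2}` of them.  Markov's inequality for `Z^t` gives
`Pr[d_H ≥ d] ≤ (e m t / (2 (2d - m)²))^{t/2}`, and `m ≤ 3n/4` turns this into the stated bound.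
-/

open scoped ENNReal BigOperators

open Finset

lemma prob_le_one {α : Type*} (X : PMF α) (P : α → Prop) : prob X P ≤ 1 :=
  (X.toOuterMeasure_apply _).trans_le <|
    (ENNReal.tsum_le_tsum fun x => Set.indicator_le_self _ _ x).trans_eq X.tsum_coe

lemma prob_toReal_eq_sum_filter {α : Type*} [Fintype α] (X : PMF α) (P : α → Prop)
    [DecidablePred P] : (prob X P).toReal = ∑ x with P x, (X x).toReal := by
  rw [prob, ← coe_filter_univ, PMF.toOuterMeasure_apply_finset,
    ENNReal.toReal_sum fun x _ => PMF.apply_ne_top X x]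

lemma prob_toReal_mul_le_sum {α : Type*} [Fintype α] (X : PMF α) (P : α → Prop) {a : ℝ}
    (Z : α → ℝ) (hZ : ∀ x, 0 ≤ Z x) (hPZ : ∀ x ∈ X.support, P x → a ≤ Z x) :
    (prob X P).toReal * a ≤ ∑ x, (X x).toReal * Z x := by
  classical
  rw [prob_toReal_eq_sum_filter, sum_mul]
  calc ∑ x with P x, (X x).toReal * a ≤ ∑ x with P x, (X x).toReal * Z x := by
        refine sum_le_sum fun x hx => ?_
        by_cases hx0 : X x = 0
        · simp [hx0]
        · exact mul_le_mul_of_nonneg_left (hPZ x hx0 (mem_filter.1 hx).2) ENNReal.toReal_nonneg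
    _ ≤ ∑ x, (X x).toReal * Z x :=
        sum_le_sum_of_subset_of_nonneg (filter_subset _ _) fun x _ _ =>
          mul_nonneg ENNReal.toReal_nonneg (hZ x)

lemma choose_mul_pow_le_exp_mul_pow (m k : ℕ) :
    (m.choose k : ℝ) * k ^ k ≤ (Real.exp 1 * m) ^ k := by
  have hk : (k : ℝ) ^ k / k.factorial ≤ Real.exp 1 ^ k := by
    simpa [← Real.exp_nat_mul] using Real.pow_div_factorial_le_exp (k : ℝ) k.cast_nonneg k
  calc (m.choose k : ℝ) * k ^ k ≤ (m : ℝ) ^ k / k.factorial * k ^ k :=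
        mul_le_mul_of_nonneg_right (Nat.choose_le_pow_div k m) (by positivity)
    _ = (m : ℝ) ^ k * ((k : ℝ) ^ k / k.factorial) := by ring
    _ ≤ (m : ℝ) ^ k * Real.exp 1 ^ k := mul_le_mul_of_nonneg_left hk (by positivity)
    _ = (Real.exp 1 * m) ^ k := by ring

lemma hammingDist_eq_card_filter_of_eqOn_compl {ι β : Type*} [Fintype ι] [DecidableEq β]
    {x y : ι → β} {T : Finset ι} (h : ∀ i ∉ T, x i = y i) :
    hammingDist x y = #{i ∈ T | x i ≠ y i} := by
  unfold hammingDist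
  congr 1
  ext i
  by_cases hi : i ∈ T <;> simp [hi, h i]

def disagreeSign (a b : ZMod 2) : ℝ := if a = b then -1 else 1

lemma sum_disagreeSign_pow (c : ZMod 2) (j : ℕ) : ∑ b, disagreeSign b c ^ j = 1 + (-1) ^ j := by
  fin_cases c <;> simp [disagreeSign, ZMod, Fin.sum_univ_two, add_comm]

lemma sum_disagreeSign {ι : Type*} (T : Finset ι) (x y : ι → ZMod 2) :
    ∑ i ∈ T, disagreeSign (x i) (y i) = 2 * #{i ∈ T | x i ≠ y i} - #T := by
  have hcard := card_filter_add_card_filter_not (s := T) (p := fun i => x i = y i)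
  simp only [disagreeSign, sum_ite, sum_const, nsmul_eq_mul, mul_neg, mul_one]
  rw [← hcard]
  push_cast
  ring

section

variable {ι : Type*} [DecidableEq ι]

lemma card_image_le_of_even_fibers {k : ℕ} {g : Fin (2 * k) → ι}
    (hg : ∀ i, Even #{j | g j = i}) : #(univ.image g) ≤ k := by
  have htwo : ∀ i ∈ univ.image g, 2 ≤ #{j | g j = i} := by
    intro i hi
    obtain ⟨j, -, rfl⟩ := mem_image.1 hi
    have hpos : 0 < #{j' | g j' = g j} := card_pos.2 ⟨j, mem_filter.2 ⟨mem_univ j, rfl⟩⟩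
    obtain ⟨c, hc⟩ := hg (g j)
    omega
  have := card_nsmul_le_sum _ _ _ htwo
  rw [← card_eq_sum_card_image, card_univ, Fintype.card_fin, smul_eq_mul] at this
  omega

variable [Fintype ι]

def evenFiberMaps (T : Finset ι) (t : ℕ) : Finset (Fin t → ι) :=
  {g ∈ Fintype.piFinset fun _ => T | ∀ i, Even #{j | g j = i}}

lemma card_evenFiberMaps_le {T : Finset ι} {k : ℕ} (hk : k ≤ #T) :
    #(evenFiberMaps T (2 * k)) ≤ (#T).choose k * k ^ (2 * k) := by
  have hsub : evenFiberMaps T (2 * k)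
      ⊆ (T.powersetCard k).biUnion fun U => Fintype.piFinset fun _ => U := by
    intro g hg
    obtain ⟨hgT, heven⟩ := mem_filter.1 hg
    obtain ⟨U, hgU, hUT, hU⟩ := exists_subsuperset_card_eq
      (image_subset_iff.2 fun j _ => Fintype.mem_piFinset.1 hgT j)
      (card_image_le_of_even_fibers heven) hk
    exact mem_biUnion.2 ⟨U, mem_powersetCard.2 ⟨hUT, hU⟩,
      Fintype.mem_piFinset.2 fun j => hgU (mem_image_of_mem g (mem_univ j))⟩
  calc _ ≤ _ := card_le_card hsub
    _ ≤ ∑ U ∈ T.powersetCard k, #(Fintype.piFinset fun _ : Fin (2 * k) => U) := card_biUnion_le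
    _ = (#T).choose k * k ^ (2 * k) := by
        rw [sum_congr rfl fun U hU => by
          rw [Fintype.card_piFinset_const, (mem_powersetCard.1 hU).2], sum_const,
          card_powersetCard, smul_eq_mul]

lemma sum_toReal_mul_prod_eq_of_prob_cylinder (Δ : PMF (ι → ZMod 2)) (S : Finset ι)
    (hS : ∀ v : ι → ZMod 2, prob Δ (fun x => ∀ i ∈ S, x i = v i) = 2⁻¹ ^ S.card)
    (c : ι → ZMod 2 → ℝ) :
    ∑ x, (Δ x).toReal * ∏ i ∈ S, c i (x i) = (1 / 2) ^ S.card * ∏ i ∈ S, ∑ b, c i b := by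
  have hfiber (w : S → ZMod 2) : ∑ x with S.restrict x = w, (Δ x).toReal = (1 / 2) ^ S.card := by
    let v : ι → ZMod 2 := fun i => if h : i ∈ S then w ⟨i, h⟩ else 0
    have hv (x : ι → ZMod 2) : S.restrict x = w ↔ ∀ i ∈ S, x i = v i := by
      simp +contextual [funext_iff, v]
    simp_rw [hv, ← prob_toReal_eq_sum_filter, hS v, ENNReal.toReal_pow, ENNReal.toReal_inv]
    norm_num
  calc ∑ x, (Δ x).toReal * ∏ i ∈ S, c i (x i)
      = ∑ w : S → ZMod 2, ∑ x with S.restrict x = w, (Δ x).toReal * ∏ i : S, c i (w i) := by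
        rw [← sum_fiberwise _ S.restrict]
        refine sum_congr rfl fun w _ => sum_congr rfl fun x hx => ?_
        rw [← (mem_filter.1 hx).2, ← prod_coe_sort]
        rfl
    _ = ∑ w : S → ZMod 2, (1 / 2) ^ S.card * ∏ i : S, c i (w i) := by
        simp_rw [← sum_mul, hfiber]
    _ = (1 / 2) ^ S.card * ∏ i ∈ S, ∑ b, c i b := by
        rw [← mul_sum, ← Fintype.prod_sum, prod_coe_sort S (fun i => ∑ b, c i b)]

def IsKWiseUniformOn (Δ : PMF (ι → ZMod 2)) (T : Finset ι) (t : ℕ) : Prop :=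
  ∀ S ⊆ T, S.card ≤ t → ∀ v : ι → ZMod 2,
    prob Δ (fun x => ∀ i ∈ S, x i = v i) = (2 : ℝ≥0∞)⁻¹ ^ S.card

variable {Δ : PMF (ι → ZMod 2)} {T : Finset ι}

lemma IsKWiseUniformOn.sum_toReal_mul_prod_disagreeSign {t : ℕ}
    (hΔ : IsKWiseUniformOn Δ T t) (δ : ι → ZMod 2) {g : Fin t → ι} (hg : ∀ j, g j ∈ T) :
    ∑ x, (Δ x).toReal * ∏ j, disagreeSign (x (g j)) (δ (g j))
      = if ∀ i, Even #{j | g j = i} then 1 else 0 := by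
  set I := univ.image g
  have hI : I.card ≤ t := card_image_le.trans_eq (card_fin t)
  have hIT : I ⊆ T := image_subset_iff.2 fun j _ => hg j
  have hprod (x : ι → ZMod 2) : ∏ j, disagreeSign (x (g j)) (δ (g j))
      = ∏ i ∈ I, disagreeSign (x i) (δ i) ^ #{j | g j = i} :=
    prod_comp (fun i => disagreeSign (x i) (δ i)) g
  simp_rw [hprod]
  rw [sum_toReal_mul_prod_eq_of_prob_cylinder Δ I (hΔ I hIT hI)
    (fun i b => disagreeSign b (δ i) ^ #{j | g j = i})]
  simp_rw [sum_disagreeSign_pow]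
  split_ifs with heven
  · rw [prod_congr rfl fun i _ => by rw [(heven i).neg_one_pow, one_add_one_eq_two], prod_const,
      ← mul_pow]
    norm_num
  · obtain ⟨i, hodd⟩ := not_forall.1 heven
    have hiI : i ∈ I := by
      obtain ⟨j, hj⟩ := card_pos.1 (Nat.pos_of_ne_zero fun h => hodd (h ▸ Even.zero))
      exact mem_image.2 ⟨j, mem_univ j, (mem_filter.1 hj).2⟩
    rw [prod_eq_zero hiI (by rw [(Nat.not_even_iff_odd.1 hodd).neg_one_pow, add_neg_cancel]),
      mul_zero]

lemma IsKWiseUniformOn.sum_toReal_mul_sum_disagreeSign_pow {t : ℕ}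
    (hΔ : IsKWiseUniformOn Δ T t) (δ : ι → ZMod 2) :
    ∑ x, (Δ x).toReal * (∑ i ∈ T, disagreeSign (x i) (δ i)) ^ t
      = #(evenFiberMaps T t) := by
  simp_rw [sum_pow', mul_sum]
  rw [sum_comm, evenFiberMaps, ← sum_boole]
  exact sum_congr rfl fun g hg =>
    hΔ.sum_toReal_mul_prod_disagreeSign δ fun j => Fintype.mem_piFinset.1 hg j

theorem IsKWiseUniformOn.toReal_prob_le_hammingDist_le {k : ℕ}
    (hΔ : IsKWiseUniformOn Δ T (2 * k)) (hk : k ≤ #T) {δ : ι → ZMod 2}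
    (hδ : ∀ x ∈ Δ.support, ∀ i ∉ T, x i = δ i) {d : ℕ} (hd : #T < 2 * d) :
    (prob Δ (fun x => d ≤ hammingDist x δ)).toReal
      ≤ (Real.exp 1 * #T * k / (2 * d - #T) ^ 2) ^ k := by
  set a : ℝ := 2 * d - #T
  have ha : 0 < a := by
    have : (#T : ℝ) < 2 * d := by exact_mod_cast hd
    linarith
  have hmarkov := prob_toReal_mul_le_sum Δ (fun x => d ≤ hammingDist x δ) (a := a ^ (2 * k))
    (fun x => (∑ i ∈ T, disagreeSign (x i) (δ i)) ^ (2 * k))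
    (fun x => (even_two_mul k).pow_nonneg _) fun x hx hdx => by
      refine pow_le_pow_left₀ ha.le ?_ _
      rw [sum_disagreeSign, ← hammingDist_eq_card_filter_of_eqOn_compl (hδ x hx)]
      have : (d : ℝ) ≤ hammingDist x δ := by exact_mod_cast hdx
      linarith
  have hmoment : ((#T).choose k * k ^ (2 * k) : ℝ) ≤ (Real.exp 1 * #T * k) ^ k := by
    rw [pow_mul', sq, ← mul_assoc, mul_pow]
    exact mul_le_mul_of_nonneg_right (choose_mul_pow_le_exp_mul_pow _ k) (by positivity)
  rw [hΔ.sum_toReal_mul_sum_disagreeSign_pow δ] at hmarkov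
  rw [div_pow, le_div_iff₀ (by positivity), ← pow_mul]
  calc _ ≤ (#(evenFiberMaps T (2 * k)) : ℝ) := hmarkov
    _ ≤ ((#T).choose k * k ^ (2 * k) : ℕ) := by exact_mod_cast card_evenFiberMaps_le hk
    _ ≤ _ := by push_cast; exact hmoment

end

lemma exp_one_mul_div_sq_le {m n d k : ℝ} (hn : 0 < n) (hm : 0 ≤ m) (hmn : 4 * m ≤ 3 * n)
    (hd : 3 * n < 8 * d) (hk : 0 ≤ k) :
    Real.exp 1 * m * k / (2 * d - m) ^ 2 ≤ 2 * k / (n * (d / n - 3 / 8) ^ 2) := by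
  have hu : 0 < 2 * d - 3 * n / 4 := by linarith
  have hrhs : n * (d / n - 3 / 8) ^ 2 = (2 * d - 3 * n / 4) ^ 2 / (4 * n) := by
    field_simp
    ring
  have he : Real.exp 1 * m ≤ 8 * n := by nlinarith [Real.exp_one_lt_d9]
  rw [hrhs, div_div_eq_mul_div]
  calc Real.exp 1 * m * k / (2 * d - m) ^ 2 ≤ Real.exp 1 * m * k / (2 * d - 3 * n / 4) ^ 2 :=
        div_le_div_of_nonneg_left (by positivity) (by positivity)
          (pow_le_pow_left₀ hu.le (by linarith) 2)
    _ ≤ 2 * k * (4 * n) / (2 * d - 3 * n / 4) ^ 2 := by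
        gcongr ?_ / _
        nlinarith

lemma ofReal_natCast_div_mul_sq_sub {n d t : ℕ} (hn : 0 < n) (hd : 3 * n < 8 * d) :
    ENNReal.ofReal (t / (n * (d / n - 3 / 8) ^ 2))
      = (t : ℝ≥0∞) / ((n : ℝ≥0∞) * ((d : ℝ≥0∞) / (n : ℝ≥0∞) - 3 / 8) ^ 2) := by
  have hn' : (0 : ℝ) < n := by exact_mod_cast hn
  have hc : 0 < (d : ℝ) / n - 3 / 8 := by
    rw [sub_pos, lt_div_iff₀ hn']
    have : (3 * n : ℝ) < 8 * d := by exact_mod_cast hd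
    linarith
  rw [ENNReal.ofReal_div_of_pos (by positivity), ENNReal.ofReal_natCast,
    ENNReal.ofReal_mul hn'.le, ENNReal.ofReal_natCast, ENNReal.ofReal_pow hc.le,
    ENNReal.ofReal_sub _ (by norm_num), ENNReal.ofReal_div_of_pos hn', ENNReal.ofReal_natCast,
    ENNReal.ofReal_natCast, ENNReal.ofReal_div_of_pos (by norm_num)]
  norm_num

theorem case3_distance_tail_bound_general (n t d p r : ℕ)
    (ht_even : Even t) (hrt : r ≤ t) (htn : 2 * t < n)
    (hd : 3 * n < 8 * d) (hpr_lo : t < p + r) (hpr_hi : 2 * p ≤ n - r)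
    (T : Finset (Fin n)) (hT : T.card = p + r)
    (Δ : PMF (Fin n → ZMod 2))
    (hindep : ∀ S : Finset (Fin n), S ⊆ T → S.card ≤ t → ∀ v : Fin n → ZMod 2,
      prob Δ (fun x => ∀ i ∈ S, x i = v i) = (2 : ℝ≥0∞)⁻¹ ^ S.card)
    (fix : Fin n → ZMod 2)
    (hfix : ∀ x ∈ Δ.support, ∀ i ∉ T, x i = fix i)
    (δstar : Fin n → ZMod 2)
    (hδstar : ∀ i ∉ T, δstar i = fix i) :
    prob Δ (fun x => d ≤ hammingDist x δstar)
      ≤ ((t : ℝ≥0∞) / ((n : ℝ≥0∞) * ((d : ℝ≥0∞) / (n : ℝ≥0∞) - 3 / 8) ^ 2)) ^ (t / 2) := by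
  obtain ⟨k, rfl⟩ := ht_even.two_dvd
  have hn : 0 < n := by omega
  have hmn : 4 * #T < 3 * n := by omega
  have hbound := IsKWiseUniformOn.toReal_prob_le_hammingDist_le hindep (by omega)
    (fun x hx i hi => (hfix x hx i hi).trans (hδstar i hi).symm) (d := d) (by omega)
  rw [Nat.mul_div_cancel_left k two_pos, ← ofReal_natCast_div_mul_sq_sub hn hd,
    ← ENNReal.ofReal_pow (by positivity),
    ← ENNReal.ofReal_toReal (ne_top_of_le_ne_top ENNReal.one_ne_top (prob_le_one _ _))]
  refine ENNReal.ofReal_le_ofReal (hbound.trans (pow_le_pow_left₀ (by positivity) ?_ k))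
  push_cast
  exact exp_one_mul_div_sq_le (by exact_mod_cast hn) (by positivity)
    (by exact_mod_cast hmn.le) (by exact_mod_cast hd) (by positivity)

/-- distance tail bound in Case 3: let `t` be even, `t > 6`,
`r ≤ t < n/2`, `d > 3n/8` and `t - r < p ≤ (n-r)/2`.  Let `Δ` be a random vector in
`{0,1}ⁿ` whose coordinates in a set `T` of size `p + r` are `t`-wise independent uniform
bits and whose remaining coordinates are fixed, and let `δ*` agree with `Δ` on the fixed
coordinates.  Then `Pr[d_H(Δ,δ*) ≥ d] ≤ (t / (n (d/n - 3/8)²))^{t/2}`. -/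
theorem case3_distance_tail_bound (n t d p r : ℕ)
    (ht_even : Even t) (ht : 6 < t) (hrt : r ≤ t) (htn : 2 * t < n)
    (hd : 3 * n < 8 * d) (hpr_lo : t < p + r) (hpr_hi : 2 * p ≤ n - r)
    (T : Finset (Fin n)) (hT : T.card = p + r)
    (Δ : PMF (Fin n → ZMod 2))
    (hindep : ∀ S : Finset (Fin n), S ⊆ T → S.card ≤ t → ∀ v : Fin n → ZMod 2,
      prob Δ (fun x => ∀ i ∈ S, x i = v i) = (2 : ℝ≥0∞)⁻¹ ^ S.card)
    (fix : Fin n → ZMod 2)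
    (hfix : ∀ x ∈ Δ.support, ∀ i ∉ T, x i = fix i)
    (δstar : Fin n → ZMod 2)
    (hδstar : ∀ i ∉ T, δstar i = fix i) :
    prob Δ (fun x => d ≤ hammingDist x δstar)
      ≤ ((t : ℝ≥0∞) / ((n : ℝ≥0∞) * ((d : ℝ≥0∞) / (n : ℝ≥0∞) - 3 / 8) ^ 2)) ^ (t / 2) :=
  case3_distance_tail_bound_general n t d p r ht_even hrt htn hd hpr_lo hpr_hi T hT Δ hindep fix
    hfix δstar hδstar
end
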